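/- Let n, σ, α be real numbers with α(σ+n−2) > 0 and let C_osc ≥ 1. There exists a constant C > 0, depending only on α, σ, n and C_osc, such that for every L > 0, every positive integer N with h = L/N, and every N-periodic sequence u with u_i > 0 satisfying the oscillation condition u_i ≤ C_osc u_{i+1} and u_i ≤ C_osc u_{i−1} for all i, one has B_Δ^h(u, α u^σ) ≥ C · h Σ_i u_i^{σ+n−3} d_i², where B_Δ^h(u, α u^σ) denotes B_Δ^h(u, v) with v_i = α u_i^σ. -/

import Mathlib

open Finset

/-- Forward difference quotient `d_i = (u_{i+1} - u_i)/h`. -/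
noncomputable def dq (h : ℝ) (u : ℤ → ℝ) (i : ℤ) : ℝ := (u (i + 1) - u i) / h

/-- Discrete Laplacian `(Δ_h u)_i = (u_{i+1} - 2u_i + u_{i-1})/h²`. -/
noncomputable def lap (h : ℝ) (u : ℤ → ℝ) (i : ℤ) : ℝ :=
  (u (i + 1) - 2 * u i + u (i - 1)) / h ^ 2

/-- The discrete operator `B_Δ^h(u,v) = -h Σ_i u_i^{n-2} (Δ_h u)_i v_i`. -/
noncomputable def Bdelta (n h : ℝ) (N : ℕ) (u v : ℤ → ℝ) : ℝ :=
  -(h * ∑ i ∈ Icc (1 : ℤ) (N : ℤ), u i ^ (n - 2) * lap h u i * v i)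

/-- Summing an `N`-periodic sequence over a full period is shift invariant. -/
lemma shift_sum (N : ℕ) (hN : 0 < N) (F : ℤ → ℝ) (hF : ∀ i : ℤ, F (i + N) = F i) :
    ∑ i ∈ Icc (1:ℤ) (N:ℤ), F (i + 1) = ∑ i ∈ Icc (1:ℤ) (N:ℤ), F i := by
  have h1 : ∑ i ∈ Icc (1:ℤ) (N:ℤ), F (i + 1) = ∑ i ∈ Icc (2:ℤ) ((N:ℤ)+1), F i := by
    have hm := Finset.map_add_right_Icc (1:ℤ) (N:ℤ) 1
    rw [show (1:ℤ)+1 = 2 from rfl] at hm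
    rw [← hm, Finset.sum_map]
    rfl
  have hN1 : (1:ℤ) ≤ (N:ℤ) := by exact_mod_cast hN
  have e1 : Icc (1:ℤ) (N:ℤ) = insert 1 (Icc (2:ℤ) (N:ℤ)) := by
    ext x; simp only [Finset.mem_Icc, Finset.mem_insert]; omega
  have e2 : Icc (2:ℤ) ((N:ℤ)+1) = insert ((N:ℤ)+1) (Icc (2:ℤ) (N:ℤ)) := by
    ext x; simp only [Finset.mem_Icc, Finset.mem_insert]; omega
  have hFN : F ((N:ℤ)+1) = F 1 := by
    have := hF 1; rw [← this]; ring_nf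
  rw [h1, e1, e2, Finset.sum_insert (by simp), Finset.sum_insert (by simp), hFN]

/-- Pointwise MVT bound: `α (x^p - y^p)(x - y) ≥ α p C_osc^{-|p-1|} y^{p-1} (x-y)²`
for comparable positive `x, y`. -/
lemma key_ineq (p α Cosc : ℝ) (hαp : 0 < α * p) (hC : 1 ≤ Cosc) (x y : ℝ)
    (hx : 0 < x) (hy : 0 < y) (hxy : x ≤ Cosc * y) (hyx : y ≤ Cosc * x) :
    α * p * Cosc ^ (-|p - 1|) * (y ^ (p - 1) * (x - y) ^ 2) ≤
      α * ((x ^ p - y ^ p) * (x - y)) := by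
  have hCpos : (0:ℝ) < Cosc := lt_of_lt_of_le one_pos hC
  rcases eq_or_ne x y with rfl | hne
  · simp
  · set a := min x y with ha
    set b := max x y with hb
    have hab : a < b := min_lt_max.mpr hne
    have hapos : 0 < a := lt_min hx hy
    have hcont : ContinuousOn (fun t : ℝ => t ^ p) (Set.Icc a b) := by
      intro t ht
      have htpos : 0 < t := lt_of_lt_of_le hapos ht.1
      exact (Real.continuousAt_rpow_const t p (Or.inl htpos.ne')).continuousWithinAt
    have hderiv : ∀ t ∈ Set.Ioo a b, HasDerivAt (fun t : ℝ => t ^ p) (p * t ^ (p - 1)) t := by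
      intro t ht
      exact Real.hasDerivAt_rpow_const (Or.inl (lt_of_lt_of_le hapos ht.1.le).ne')
    obtain ⟨ξ, hξ, hslope⟩ := exists_hasDerivAt_eq_slope _ _ hab hcont hderiv
    have hξpos : 0 < ξ := lt_trans hapos hξ.1
    have hba : b - a ≠ 0 := sub_ne_zero.mpr hab.ne'
    have hid : (x ^ p - y ^ p) * (x - y) = p * ξ ^ (p - 1) * (x - y) ^ 2 := by
      have h2 : b ^ p - a ^ p = p * ξ ^ (p - 1) * (b - a) := by
        field_simp at hslope
        linarith [hslope]
      rcases le_or_gt x y with hle | hlt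
      · have hax : a = x := min_eq_left hle
        have hby : b = y := max_eq_right hle
        rw [hax, hby] at h2
        nlinarith [h2]
      · have hay : a = y := min_eq_right hlt.le
        have hbx : b = x := max_eq_left hlt.le
        rw [hay, hbx] at h2
        nlinarith [h2]
    rw [hid]
    have hξle : ξ ≤ Cosc * y :=
      (lt_of_lt_of_le hξ.2 (max_le hxy (le_mul_of_one_le_left hy.le hC))).le
    have hξge : y / Cosc ≤ ξ := by
      have h1 : y / Cosc ≤ x := (div_le_iff₀ hCpos).mpr (by linarith [hyx, mul_comm Cosc x])
      have h2 : y / Cosc ≤ y := by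
        rw [div_le_iff₀ hCpos]; nlinarith
      exact le_trans (le_min h1 h2) hξ.1.le
    have hbound : Cosc ^ (-|p - 1|) * y ^ (p - 1) ≤ ξ ^ (p - 1) := by
      rcases le_or_gt 0 (p - 1) with hp1 | hp1
      · rw [abs_of_nonneg hp1, Real.rpow_neg hCpos.le]
        have := Real.rpow_le_rpow (by positivity) hξge hp1
        rw [Real.div_rpow hy.le hCpos.le] at this
        calc (Cosc ^ (p-1))⁻¹ * y ^ (p-1) = y ^ (p-1) / Cosc ^ (p-1) := by ring
        _ ≤ ξ ^ (p-1) := this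
      · rw [abs_of_neg hp1, neg_neg]
        have := Real.rpow_le_rpow_of_nonpos hξpos hξle hp1.le
        rw [Real.mul_rpow hCpos.le hy.le] at this
        exact this
    have hsq : (0:ℝ) ≤ (x - y) ^ 2 := sq_nonneg _
    calc α * p * Cosc ^ (-|p - 1|) * (y ^ (p - 1) * (x - y) ^ 2)
        = (α * p) * ((Cosc ^ (-|p-1|) * y ^ (p-1)) * (x - y) ^ 2) := by ring
      _ ≤ (α * p) * (ξ ^ (p - 1) * (x - y) ^ 2) := by
          apply mul_le_mul_of_nonneg_left (mul_le_mul_of_nonneg_right hbound hsq) hαp.le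
      _ = α * (p * ξ ^ (p - 1) * (x - y) ^ 2) := by ring

/-- if `α(σ+n-2) > 0` then `B_Δ^h(u, α u^σ) ≥ C h Σ_i u_i^{σ+n-3} d_i²`
whenever `u` satisfies the oscillation condition with constant `C_osc`. -/
theorem statement7 (n σ α Cosc : ℝ) (hασn : 0 < α * (σ + n - 2)) (hCosc : 1 ≤ Cosc) :
    ∃ C : ℝ, 0 < C ∧
      ∀ (L : ℝ) (hL : 0 < L) (N : ℕ) (hN : 0 < N) (h : ℝ) (hh : h = L / N)
        (u : ℤ → ℝ) (hper : ∀ i : ℤ, u (i + (N : ℤ)) = u i) (hpos : ∀ i : ℤ, 0 < u i)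
        (hosc : ∀ i : ℤ, u i ≤ Cosc * u (i + 1) ∧ u i ≤ Cosc * u (i - 1)),
        Bdelta n h N u (fun i => α * u i ^ σ) ≥
          C * h * ∑ i ∈ Icc (1 : ℤ) (N : ℤ), u i ^ (σ + n - 3) * (dq h u i) ^ 2 := by
  set p := σ + n - 2 with hp
  have hCpos : (0:ℝ) < Cosc := lt_of_lt_of_le one_pos hCosc
  refine ⟨α * p * Cosc ^ (-|p - 1|), by positivity, ?_⟩
  set C := α * p * Cosc ^ (-|p - 1|) with hCdef
  intro L hL N hN h hh u hper hpos hosc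
  have hhpos : 0 < h := by
    rw [hh]; positivity
  have hhne : h ≠ 0 := hhpos.ne'
  set s1 := ∑ i ∈ Icc (1:ℤ) (N:ℤ), u i ^ p * (u (i+1) - u i) with hs1
  set s4 := ∑ i ∈ Icc (1:ℤ) (N:ℤ), u (i+1) ^ p * (u (i+1) - u i) with hs4
  have hshift : ∑ i ∈ Icc (1:ℤ) (N:ℤ), u (i+1) ^ p * (u ((i+1)-1) - u (i+1))
      = ∑ i ∈ Icc (1:ℤ) (N:ℤ), u i ^ p * (u (i-1) - u i) := by
    exact shift_sum N hN (fun i => u i ^ p * (u (i-1) - u i)) (by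
      intro i
      have h1 : u (i + (N:ℤ) - 1) = u (i - 1) := by
        have := hper (i - 1)
        rw [← this]; congr 1; ring
      simp only [hper i, h1])
  have hs2 : ∑ i ∈ Icc (1:ℤ) (N:ℤ), u i ^ p * (u (i-1) - u i) = -s4 := by
    rw [← hshift, hs4, ← Finset.sum_neg_distrib]
    apply Finset.sum_congr rfl
    intro i _
    have : (i + 1) - 1 = i := by ring
    rw [this]; ring
  have hBe : Bdelta n h N u (fun i => α * u i ^ σ) = (1/h) * (α * (s4 - s1)) := by
    unfold Bdelta lap
    have h2 : ∀ i ∈ Icc (1:ℤ) (N:ℤ),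
        u i ^ (n-2) * ((u (i+1) - 2 * u i + u (i-1)) / h^2) * (α * u i ^ σ)
        = (α/h^2) * (u i ^ p * (u (i+1) - u i) + u i ^ p * (u (i-1) - u i)) := by
      intro i _
      have hup : u i ^ p = u i ^ σ * u i ^ (n-2) := by
        rw [show p = σ + (n-2) by ring, Real.rpow_add (hpos i)]
      rw [hup]; field_simp; ring
    rw [Finset.sum_congr rfl h2, ← Finset.mul_sum, Finset.sum_add_distrib, hs2, ← hs1]
    field_simp
    ring
  have hRe : C * h * (∑ i ∈ Icc (1:ℤ) (N:ℤ), u i ^ (σ + n - 3) * (dq h u i)^2)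
      = (1/h) * ∑ i ∈ Icc (1:ℤ) (N:ℤ), C * (u i ^ (p-1) * (u (i+1) - u i)^2) := by
    rw [Finset.mul_sum, Finset.mul_sum]
    apply Finset.sum_congr rfl
    intro i _
    unfold dq
    rw [show σ + n - 3 = p - 1 by rw [hp]; ring]
    field_simp
  have hsum : ∑ i ∈ Icc (1:ℤ) (N:ℤ), C * (u i ^ (p-1) * (u (i+1) - u i)^2)
      ≤ ∑ i ∈ Icc (1:ℤ) (N:ℤ), α * ((u (i+1) ^ p - u i ^ p) * (u (i+1) - u i)) := by
    apply Finset.sum_le_sum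
    intro i _
    apply key_ineq p α Cosc hασn hCosc (u (i+1)) (u i) (hpos _) (hpos _)
    · have := (hosc (i+1)).2
      rwa [show i + 1 - 1 = i by ring] at this
    · exact (hosc i).1
  have hsum2 : ∑ i ∈ Icc (1:ℤ) (N:ℤ), α * ((u (i+1) ^ p - u i ^ p) * (u (i+1) - u i))
      = α * (s4 - s1) := by
    rw [hs4, hs1, ← Finset.sum_sub_distrib, Finset.mul_sum]
    apply Finset.sum_congr rfl
    intro i _; ring
  rw [ge_iff_le, hBe, hRe]
  apply mul_le_mul_of_nonneg_left _ (by positivity)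
  rw [← hsum2]
  exact hsum
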